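/- arXiv:1105.2697 — 4 statements merged into one kernel-verified Lean document; each statement's English description precedes it below -/
import Mathlib

section
/- For all real α, β, γ: exp(α e₁)·exp(β e₁e₂)·exp(γ e₁) = exp(β·exp(2α e₁)·e₁e₂)·exp((α+γ)·e₁). -/
open Quaternion

/-- `e₁ = i` in the quaternion model of `A₂ = Cl_{0,2}`. -/
def qi : ℍ[ℝ] := ⟨0, 1, 0, 0⟩

/-- `e₁e₂ = k` in the quaternion model of `A₂ = Cl_{0,2}`. -/
def qk : ℍ[ℝ] := ⟨0, 0, 0, 1⟩

lemma norm_eq_one_of (v : ℍ[ℝ]) (h : normSq v = 1) : ‖v‖ = 1 := by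
  have := Quaternion.normSq_eq_norm_mul_self v
  nlinarith [norm_nonneg v]

lemma exp_unit_im (t : ℝ) (v : ℍ[ℝ]) (hre : v.re = 0) (hn : ‖v‖ = 1) :
    NormedSpace.exp (t • v) = (Real.cos t : ℍ[ℝ]) + Real.sin t • v := by
  rw [Quaternion.exp_of_re_eq_zero (t • v) (by simp [hre])]
  rw [norm_smul, hn, mul_one, Real.norm_eq_abs]
  rcases lt_trichotomy t 0 with ht | rfl | ht
  · rw [abs_of_neg ht, Real.cos_neg, Real.sin_neg, smul_smul]
    rw [neg_div_neg_eq, div_mul_cancel₀ _ (ne_of_lt ht)]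
  · simp
  · rw [abs_of_pos ht, smul_smul, div_mul_cancel₀ _ (ne_of_gt ht)]

def qmk (a b c d : ℝ) : ℍ[ℝ] := ⟨a, b, c, d⟩

@[simp] lemma qmk_re (a b c d : ℝ) : (qmk a b c d).re = a := rfl
@[simp] lemma qmk_imI (a b c d : ℝ) : (qmk a b c d).imI = b := rfl
@[simp] lemma qmk_imJ (a b c d : ℝ) : (qmk a b c d).imJ = c := rfl
@[simp] lemma qmk_imK (a b c d : ℝ) : (qmk a b c d).imK = d := rfl
@[simp] lemma qi_re : qi.re = 0 := rfl
@[simp] lemma qi_imI : qi.imI = 1 := rfl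
@[simp] lemma qi_imJ : qi.imJ = 0 := rfl
@[simp] lemma qi_imK : qi.imK = 0 := rfl
@[simp] lemma qk_re : qk.re = 0 := rfl
@[simp] lemma qk_imI : qk.imI = 0 := rfl
@[simp] lemma qk_imJ : qk.imJ = 0 := rfl
@[simp] lemma qk_imK : qk.imK = 1 := rfl

/-- In `A₂ = Cl_{0,2}`:
`exp(α e₁)·exp(β e₁e₂)·exp(γ e₁) = exp(β·exp(2α e₁)·e₁e₂)·exp((α+γ)·e₁)`. -/
theorem stmt_13 (α β γ : ℝ) :
    NormedSpace.exp (α • qi) * NormedSpace.exp (β • qk) *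
        NormedSpace.exp (γ • qi) =
      NormedSpace.exp (β • (NormedSpace.exp ((2 * α) • qi) * qk)) *
        NormedSpace.exp ((α + γ) • qi) := by
  have hqi : qi.re = 0 := rfl
  have hqk : qk.re = 0 := rfl
  have hqi1 : ‖qi‖ = 1 := norm_eq_one_of _ (by rw [Quaternion.normSq_def']; simp [qi])
  have hqk1 : ‖qk‖ = 1 := norm_eq_one_of _ (by rw [Quaternion.normSq_def']; simp [qk])
  have hv : (↑(Real.cos (2*α)) + Real.sin (2*α) • qi) * qk
      = qmk 0 0 (-(Real.sin (2*α))) (Real.cos (2*α)) := by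
    ext <;> simp
  rw [exp_unit_im _ _ hqi hqi1, exp_unit_im _ _ hqk hqk1, exp_unit_im _ _ hqi hqi1,
    exp_unit_im _ _ hqi hqi1, exp_unit_im _ _ hqi hqi1, hv,
    exp_unit_im _ _ rfl (norm_eq_one_of _ (by rw [Quaternion.normSq_def']; simp))]
  have pyth := Real.sin_sq_add_cos_sq α
  ext <;>
    simp [Real.cos_add, Real.sin_add, Real.sin_two_mul, Real.cos_two_mul]
  all_goals first
  | ring1
  | linear_combination (-2 * Real.sin β * Real.cos α * Real.sin γ) * pyth
  | linear_combination (-2 * Real.sin β * Real.cos α * Real.cos γ) * pyth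
end

section
/- Every unit element a = a₀ + a₁e₁ + a₂e₂ + a₁₂e₁e₂ of A₂ = Cl_{0,2} with (a₀² + a₁²)(a₂² + a₁₂²) ≠ 0 admits a decomposition a = exp(α e₁)·exp(β e₁e₂)·exp(γ e₁) for some real α, β, γ with sin(2β) ≠ 0; moreover cos²β = a₀² + a₁² and sin²β = a₂² + a₁₂². -/
open Quaternion

lemma norm_smul_qi (α : ℝ) : ‖α • qi‖ = |α| := by
  rw [norm_smul, Real.norm_eq_abs]
  have : ‖qi‖ = 1 := by
    have : Quaternion.normSq qi = 1 := by rw [Quaternion.normSq_def']; simp [qi]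
    have h := Quaternion.normSq_eq_norm_mul_self qi
    nlinarith [norm_nonneg qi]
  rw [this, mul_one]

lemma norm_smul_qk (α : ℝ) : ‖α • qk‖ = |α| := by
  rw [norm_smul, Real.norm_eq_abs]
  have : ‖qk‖ = 1 := by
    have : Quaternion.normSq qk = 1 := by rw [Quaternion.normSq_def']; simp [qk]
    have h := Quaternion.normSq_eq_norm_mul_self qk
    nlinarith [norm_nonneg qk]
  rw [this, mul_one]

lemma exp_qi (α : ℝ) :
    NormedSpace.exp (α • qi) = (⟨Real.cos α, Real.sin α, 0, 0⟩ : ℍ[ℝ]) := by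
  rw [Quaternion.exp_of_re_eq_zero (α • qi) (by rw [Quaternion.re_smul]; simp [qi]), norm_smul_qi]
  rcases eq_or_ne α 0 with rfl | hα
  · ext <;> simp [qi]
  · have h1 : Real.sin |α| / |α| * α = Real.sin α := by
      rcases abs_cases α with ⟨h, _⟩ | ⟨h, _⟩
      · rw [h]; field_simp
      · rw [h, Real.sin_neg]
        field_simp
    ext <;> simp [Quaternion.re_smul, Quaternion.imI_smul, Quaternion.imJ_smul, Quaternion.imK_smul] <;> simp [qi, Real.cos_abs, h1, mul_comm]

lemma exp_qk (α : ℝ) :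
    NormedSpace.exp (α • qk) = (⟨Real.cos α, 0, 0, Real.sin α⟩ : ℍ[ℝ]) := by
  rw [Quaternion.exp_of_re_eq_zero (α • qk) (by rw [Quaternion.re_smul]; simp [qk]), norm_smul_qk]
  rcases eq_or_ne α 0 with rfl | hα
  · ext <;> simp [qk]
  · have h1 : Real.sin |α| / |α| * α = Real.sin α := by
      rcases abs_cases α with ⟨h, _⟩ | ⟨h, _⟩
      · rw [h]; field_simp
      · rw [h, Real.sin_neg]
        field_simp
    ext <;> simp [Quaternion.re_smul, Quaternion.imI_smul, Quaternion.imJ_smul, Quaternion.imK_smul] <;> simp [qk, Real.cos_abs, h1, mul_comm]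

lemma triple_prod (cα sα cβ sβ cγ sγ : ℝ) :
    (⟨cα, sα, 0, 0⟩ * ⟨cβ, 0, 0, sβ⟩ * ⟨cγ, sγ, 0, 0⟩ : ℍ[ℝ]) =
      ⟨cβ * (cα * cγ - sα * sγ), cβ * (sα * cγ + cα * sγ),
       sβ * (cα * sγ - sα * cγ), sβ * (cα * cγ + sα * sγ)⟩ := by
  have key : ∀ A B C : ℍ[ℝ], A = ⟨cα, sα, 0, 0⟩ → B = ⟨cβ, 0, 0, sβ⟩ → C = ⟨cγ, sγ, 0, 0⟩ →
      A * B * C = ⟨cβ * (cα * cγ - sα * sγ), cβ * (sα * cγ + cα * sγ),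
       sβ * (cα * sγ - sα * cγ), sβ * (cα * cγ + sα * sγ)⟩ := by
    intro A B C hA hB hC
    ext <;> simp only [Quaternion.re_mul, Quaternion.imI_mul, Quaternion.imJ_mul,
      Quaternion.imK_mul] <;> subst hA hB hC <;> simp <;> ring
  exact key _ _ _ rfl rfl rfl

/-- Every unit element `a = a₀ + a₁e₁ + a₂e₂ + a₁₂e₁e₂` of `A₂ = Cl_{0,2}` with
`(a₀² + a₁²)(a₂² + a₁₂²) ≠ 0` admits an Euler decomposition
`a = exp(α e₁)·exp(β e₁e₂)·exp(γ e₁)` with `sin(2β) ≠ 0`; moreover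
`cos²β = a₀² + a₁²` and `sin²β = a₂² + a₁₂²`. -/
theorem stmt_15 (a : ℍ[ℝ]) (ha : ‖a‖ = 1)
    (hreg : (a.re ^ 2 + a.imI ^ 2) * (a.imJ ^ 2 + a.imK ^ 2) ≠ 0) :
    ∃ α β γ : ℝ, Real.sin (2 * β) ≠ 0 ∧
      a = NormedSpace.exp (α • qi) * NormedSpace.exp (β • qk) *
            NormedSpace.exp (γ • qi) ∧
      Real.cos β ^ 2 = a.re ^ 2 + a.imI ^ 2 ∧
      Real.sin β ^ 2 = a.imJ ^ 2 + a.imK ^ 2 := by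
  have hnormSq : a.re ^ 2 + a.imI ^ 2 + a.imJ ^ 2 + a.imK ^ 2 = 1 := by
    have h := Quaternion.normSq_eq_norm_mul_self a
    rw [ha, mul_one] at h
    rw [← Quaternion.normSq_def', h]
  have h1pos : 0 < a.re ^ 2 + a.imI ^ 2 := by
    rcases (mul_ne_zero_iff.1 hreg).1.lt_or_gt with h | h
    · nlinarith [sq_nonneg a.re, sq_nonneg a.imI]
    · exact h
  have h2pos : 0 < a.imJ ^ 2 + a.imK ^ 2 := by
    rcases (mul_ne_zero_iff.1 hreg).2.lt_or_gt with h | h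
    · nlinarith [sq_nonneg a.imJ, sq_nonneg a.imK]
    · exact h
  set r₁ := Real.sqrt (a.re ^ 2 + a.imI ^ 2) with hr₁
  set r₂ := Real.sqrt (a.imJ ^ 2 + a.imK ^ 2) with hr₂
  have hr₁pos : 0 < r₁ := Real.sqrt_pos.2 h1pos
  have hr₂pos : 0 < r₂ := Real.sqrt_pos.2 h2pos
  have hr₁sq : r₁ ^ 2 = a.re ^ 2 + a.imI ^ 2 := Real.sq_sqrt h1pos.le
  have hr₂sq : r₂ ^ 2 = a.imJ ^ 2 + a.imK ^ 2 := Real.sq_sqrt h2pos.le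
  have hr₁le : r₁ ≤ 1 := by nlinarith
  set β := Real.arccos r₁ with hβ
  have hcosβ : Real.cos β = r₁ := Real.cos_arccos (by linarith [hr₁pos]) hr₁le
  have hsinβ : Real.sin β = r₂ := by
    rw [hβ, Real.sin_arccos]
    rw [show (1 : ℝ) - r₁ ^ 2 = r₂ ^ 2 by nlinarith]
    exact Real.sqrt_sq hr₂pos.le
  set z : ℂ := ⟨a.re, a.imI⟩ with hz
  have hzabs : ‖z‖ = r₁ := by
    rw [Complex.norm_def, Complex.normSq_mk, hr₁]; ring_nf
  have hzne : z ≠ 0 := by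
    intro h; rw [h] at hzabs; simp at hzabs; exact hr₁pos.ne' hzabs.symm
  set w : ℂ := ⟨a.imK, a.imJ⟩ with hw
  have hwabs : ‖w‖ = r₂ := by
    rw [Complex.norm_def, Complex.normSq_mk, hr₂]; ring_nf
  have hwne : w ≠ 0 := by
    intro h; rw [h] at hwabs; simp at hwabs; exact hr₂pos.ne' hwabs.symm
  set u := Complex.arg z with hu
  set v := Complex.arg w with hv
  have hcu : Real.cos u = a.re / r₁ := by rw [hu, Complex.cos_arg hzne, hzabs, hz]
  have hsu : Real.sin u = a.imI / r₁ := by rw [hu, Complex.sin_arg, hzabs, hz]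
  have hcv : Real.cos v = a.imK / r₂ := by rw [hv, Complex.cos_arg hwne, hwabs, hw]
  have hsv : Real.sin v = a.imJ / r₂ := by rw [hv, Complex.sin_arg, hwabs, hw]
  refine ⟨(u - v) / 2, β, (u + v) / 2, ?_, ?_, by rw [hcosβ, hr₁sq], by rw [hsinβ, hr₂sq]⟩
  · rw [Real.sin_two_mul, hcosβ, hsinβ]
    positivity
  · rw [exp_qi, exp_qi, exp_qk, triple_prod]
    have e1 : (u - v) / 2 + (u + v) / 2 = u := by ring
    have e2 : (u + v) / 2 - (u - v) / 2 = v := by ring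
    have hcadd : Real.cos ((u - v) / 2) * Real.cos ((u + v) / 2) -
        Real.sin ((u - v) / 2) * Real.sin ((u + v) / 2) = Real.cos u := by
      rw [← Real.cos_add, e1]
    have hsadd : Real.sin ((u - v) / 2) * Real.cos ((u + v) / 2) +
        Real.cos ((u - v) / 2) * Real.sin ((u + v) / 2) = Real.sin u := by
      rw [← Real.sin_add, e1]
    have hcsub : Real.cos ((u - v) / 2) * Real.cos ((u + v) / 2) +
        Real.sin ((u - v) / 2) * Real.sin ((u + v) / 2) = Real.cos v := by
      rw [show Real.cos ((u - v) / 2) * Real.cos ((u + v) / 2) +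
        Real.sin ((u - v) / 2) * Real.sin ((u + v) / 2) =
        Real.cos ((u + v) / 2) * Real.cos ((u - v) / 2) +
        Real.sin ((u + v) / 2) * Real.sin ((u - v) / 2) by ring,
        ← Real.cos_sub, e2]
    have hssub : Real.cos ((u - v) / 2) * Real.sin ((u + v) / 2) -
        Real.sin ((u - v) / 2) * Real.cos ((u + v) / 2) = Real.sin v := by
      rw [show Real.cos ((u - v) / 2) * Real.sin ((u + v) / 2) -
        Real.sin ((u - v) / 2) * Real.cos ((u + v) / 2) =
        Real.sin ((u + v) / 2) * Real.cos ((u - v) / 2) -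
        Real.cos ((u + v) / 2) * Real.sin ((u - v) / 2) by ring,
        ← Real.sin_sub, e2]
    ext
    · show a.re = Real.cos β * _
      rw [hcadd, hcosβ, hcu]; field_simp
    · show a.imI = Real.cos β * _
      rw [hsadd, hcosβ, hsu]; field_simp
    · show a.imJ = Real.sin β * _
      rw [hssub, hsinβ, hsv]; field_simp
    · show a.imK = Real.sin β * _
      rw [hcsub, hsinβ, hcv]; field_simp
end

section
/- Delambre-Gauss formulas for oriented right-angled hexagons in hyperbolic 3-space, algebraic form: let δ₁,...,δ₆ ∈ ℂ and suppose A₁A₂A₃A₄A₅A₆ = εI in SL(2,ℂ) with ε ∈ {1,-1}, where Aₙ = diag(exp δₙ, exp(-δₙ)) for n = 1,3,5 and Aₙ = [[cosh δₙ, sinh δₙ],[sinh δₙ, cosh δₙ]] for n = 2,4,6. Then cosh(δ₁+δ₃)cosh δ₂ = ε cosh(δ₄+δ₆)cosh δ₅, −sinh(δ₁+δ₃)cosh δ₂ = ε cosh(δ₄−δ₆)sinh δ₅, −cosh(δ₁−δ₃)sinh δ₂ = ε sinh(δ₄+δ₆)cosh δ₅, and sinh(δ₁−δ₃)sinh δ₂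 = ε sinh(δ₄−δ₆)sinh δ₅. -/
open Complex Matrix

/-- Delambre-Gauss formulas for oriented right-angled hexagons in `H³`, algebraic form:
if `A₁A₂A₃A₄A₅A₆ = εI` with `ε = ±1`, where `Aₙ = diag(exp δₙ, exp(-δₙ))` for odd `n`
and `Aₙ = [[cosh δₙ, sinh δₙ],[sinh δₙ, cosh δₙ]]` for even `n`, then the four
Delambre-Gauss identities hold. -/
theorem stmt_18 (δ₁ δ₂ δ₃ δ₄ δ₅ δ₆ ε : ℂ) (hε : ε = 1 ∨ ε = -1)
    (A₁ A₂ A₃ A₄ A₅ A₆ : Matrix (Fin 2) (Fin 2) ℂ)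
    (h₁ : A₁ = !![Complex.exp δ₁, 0; 0, Complex.exp (-δ₁)])
    (h₂ : A₂ = !![Complex.cosh δ₂, Complex.sinh δ₂; Complex.sinh δ₂, Complex.cosh δ₂])
    (h₃ : A₃ = !![Complex.exp δ₃, 0; 0, Complex.exp (-δ₃)])
    (h₄ : A₄ = !![Complex.cosh δ₄, Complex.sinh δ₄; Complex.sinh δ₄, Complex.cosh δ₄])
    (h₅ : A₅ = !![Complex.exp δ₅, 0; 0, Complex.exp (-δ₅)])
    (h₆ : A₆ = !![Complex.cosh δ₆, Complex.sinh δ₆; Complex.sinh δ₆, Complex.cosh δ₆])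
    (hprod : A₁ * A₂ * A₃ * A₄ * A₅ * A₆ = ε • (1 : Matrix (Fin 2) (Fin 2) ℂ)) :
    Complex.cosh (δ₁ + δ₃) * Complex.cosh δ₂ = ε * (Complex.cosh (δ₄ + δ₆) * Complex.cosh δ₅) ∧
    -(Complex.sinh (δ₁ + δ₃) * Complex.cosh δ₂) = ε * (Complex.cosh (δ₄ - δ₆) * Complex.sinh δ₅) ∧
    -(Complex.cosh (δ₁ - δ₃) * Complex.sinh δ₂) = ε * (Complex.sinh (δ₄ + δ₆) * Complex.cosh δ₅) ∧
    Complex.sinh (δ₁ - δ₃) * Complex.sinh δ₂ = ε * (Complex.sinh (δ₄ - δ₆) * Complex.sinh δ₅) := by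
  set B₄ : Matrix (Fin 2) (Fin 2) ℂ := !![Complex.cosh δ₄, -Complex.sinh δ₄; -Complex.sinh δ₄, Complex.cosh δ₄] with hB₄def
  set B₅ : Matrix (Fin 2) (Fin 2) ℂ := !![Complex.exp (-δ₅), 0; 0, Complex.exp δ₅] with hB₅def
  set B₆ : Matrix (Fin 2) (Fin 2) ℂ := !![Complex.cosh δ₆, -Complex.sinh δ₆; -Complex.sinh δ₆, Complex.cosh δ₆] with hB₆def
  have hc4 := Complex.cosh_sq_sub_sinh_sq δ₄
  have hc6 := Complex.cosh_sq_sub_sinh_sq δ₆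
  have he5 : Complex.exp δ₅ * Complex.exp (-δ₅) = 1 := by
    rw [← Complex.exp_add]; simp
  have hB₄ : A₄ * B₄ = 1 := by
    rw [h₄, hB₄def]
    ext i j
    fin_cases i <;> fin_cases j <;>
      simp [Matrix.mul_apply, Fin.sum_univ_two, Matrix.one_apply] <;>
      first | ring1 | linear_combination hc4 | linear_combination -hc4 | linear_combination (2:ℂ)*hc4 | linear_combination (-2:ℂ)*hc4
  have hB₅ : A₅ * B₅ = 1 := by
    rw [h₅, hB₅def]
    ext i j
    fin_cases i <;> fin_cases j <;>
      simp [Matrix.mul_apply, Fin.sum_univ_two, Matrix.one_apply] <;>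
      linear_combination he5
  have hB₆ : A₆ * B₆ = 1 := by
    rw [h₆, hB₆def]
    ext i j
    fin_cases i <;> fin_cases j <;>
      simp [Matrix.mul_apply, Fin.sum_univ_two, Matrix.one_apply] <;>
      first | ring1 | linear_combination hc6 | linear_combination -hc6 | linear_combination (2:ℂ)*hc6 | linear_combination (-2:ℂ)*hc6
  have key : A₁ * A₂ * A₃ = ε • (B₆ * (B₅ * B₄)) := by
    have h : A₄ * (A₅ * (A₆ * (B₆ * (B₅ * B₄)))) = 1 := by
      rw [← mul_assoc A₆, hB₆, one_mul, ← mul_assoc A₅, hB₅, one_mul, hB₄]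
    calc A₁ * A₂ * A₃ = A₁ * A₂ * A₃ * (A₄ * (A₅ * (A₆ * (B₆ * (B₅ * B₄))))) := by
          rw [h, mul_one]
      _ = (A₁ * A₂ * A₃ * A₄ * A₅ * A₆) * (B₆ * (B₅ * B₄)) := by
          simp only [mul_assoc]
      _ = ε • (B₆ * (B₅ * B₄)) := by rw [hprod, smul_mul_assoc, one_mul]
  rw [h₁, h₂, h₃, hB₆def, hB₅def, hB₄def] at key
  have e00 := congr_fun (congr_fun key 0) 0
  have e01 := congr_fun (congr_fun key 0) 1
  have e10 := congr_fun (congr_fun key 1) 0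
  have e11 := congr_fun (congr_fun key 1) 1
  simp [Matrix.mul_apply, Fin.sum_univ_two] at e00 e01 e10 e11
  simp only [← Complex.cosh_sub_sinh, ← Complex.cosh_add_sinh, Complex.cosh_neg,
    Complex.sinh_neg] at e00 e01 e10 e11
  simp only [Complex.cosh_add, Complex.sinh_add, Complex.cosh_sub, Complex.sinh_sub]
  refine ⟨?_, ?_, ?_, ?_⟩
  · linear_combination (e00 + e11) / 2
  · linear_combination (e11 - e00) / 2
  · linear_combination -(e01 + e10) / 2
  · linear_combination (e01 - e10) / 2
end

section
/- Delambre-Gauss formulas for spherical triangles: for a spherical triangle on the unit sphere with side-lengths a,b,c ∈ (0,π) and opposite angles α,β,γ ∈ (0,π), one has cos((a+b)/2)·sin(γ/2) = cos((α+β)/2)·cos(c/2), sin((a+b)/2)·sin(γ/2) = cos((α−β)/2)·sin(c/2), cos((a−b)/2)·cos(γ/2) = sin((α+β)/2)·cos(c/2), and sin((a−b)/2)·cos(γ/2) = sin((α−β)/2)·sin(c/2). -/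
open Real

private lemma pos_sq_eq {x y : ℝ} (hx : 0 < x) (hy : 0 < y) (h : x ^ 2 = y ^ 2) : x = y := by
  have h' : (x - y) * (x + y) = 0 := by linear_combination h
  rcases mul_eq_zero.mp h' with h0 | h0
  · linarith
  · linarith

private lemma sin_sq_half' (x : ℝ) : sin (x / 2) ^ 2 = (1 - cos x) / 2 := by
  have h := cos_two_mul (x / 2)
  have h2 : 2 * (x / 2) = x := by ring
  rw [h2] at h
  have := sin_sq_add_cos_sq (x / 2)
  linarith

private lemma cos_sq_half' (x : ℝ) : cos (x / 2) ^ 2 = (1 + cos x) / 2 := by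
  have h := cos_two_mul (x / 2)
  have h2 : 2 * (x / 2) = x := by ring
  rw [h2] at h
  linarith

private lemma sin_half_eq (x : ℝ) : sin x = 2 * sin (x / 2) * cos (x / 2) := by
  have h := sin_two_mul (x / 2)
  have h2 : 2 * (x / 2) = x := by ring
  rw [h2] at h
  linarith

set_option maxHeartbeats 1600000 in
/-- Delambre-Gauss formulas for spherical triangles. A spherical triangle on the unit
sphere with side-lengths `a, b, c ∈ (0,π)` and opposite angles `α, β, γ ∈ (0,π)` is
encoded, as is standard, by the spherical laws of cosines for sides and for angles
(together with the law of sines, which follows); from these the four Delambre-Gauss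
formulas hold. -/
theorem stmt_19 (a b c α β γ : ℝ)
    (ha : a ∈ Set.Ioo 0 π) (hb : b ∈ Set.Ioo 0 π) (hc : c ∈ Set.Ioo 0 π)
    (hα : α ∈ Set.Ioo 0 π) (hβ : β ∈ Set.Ioo 0 π) (hγ : γ ∈ Set.Ioo 0 π)
    (hlc₁ : cos a = cos b * cos c + sin b * sin c * cos α)
    (hlc₂ : cos b = cos c * cos a + sin c * sin a * cos β)
    (hlc₃ : cos c = cos a * cos b + sin a * sin b * cos γ)
    (hla₁ : cos α = -(cos β * cos γ) + sin β * sin γ * cos a)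
    (hla₂ : cos β = -(cos γ * cos α) + sin γ * sin α * cos b)
    (hla₃ : cos γ = -(cos α * cos β) + sin α * sin β * cos c) :
    cos ((a + b) / 2) * sin (γ / 2) = cos ((α + β) / 2) * cos (c / 2) ∧
    sin ((a + b) / 2) * sin (γ / 2) = cos ((α - β) / 2) * sin (c / 2) ∧
    cos ((a - b) / 2) * cos (γ / 2) = sin ((α + β) / 2) * cos (c / 2) ∧
    sin ((a - b) / 2) * cos (γ / 2) = sin ((α - β) / 2) * sin (c / 2) := by
  obtain ⟨ha0, haπ⟩ := ha
  obtain ⟨hb0, hbπ⟩ := hb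
  obtain ⟨hc0, hcπ⟩ := hc
  obtain ⟨hα0, hαπ⟩ := hα
  obtain ⟨hβ0, hβπ⟩ := hβ
  obtain ⟨hγ0, hγπ⟩ := hγ
  have pipos := pi_pos
  -- positivity of sines
  have sa : 0 < sin a := sin_pos_of_pos_of_lt_pi ha0 haπ
  have sb : 0 < sin b := sin_pos_of_pos_of_lt_pi hb0 hbπ
  have sc : 0 < sin c := sin_pos_of_pos_of_lt_pi hc0 hcπ
  have sA : 0 < sin α := sin_pos_of_pos_of_lt_pi hα0 hαπ
  have sB : 0 < sin β := sin_pos_of_pos_of_lt_pi hβ0 hβπ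
  have sG : 0 < sin γ := sin_pos_of_pos_of_lt_pi hγ0 hγπ
  -- positivity of half-angle quantities
  have sGh : 0 < sin (γ / 2) := sin_pos_of_pos_of_lt_pi (by linarith) (by linarith)
  have cGh : 0 < cos (γ / 2) := cos_pos_of_mem_Ioo ⟨by linarith, by linarith⟩
  have sch : 0 < sin (c / 2) := sin_pos_of_pos_of_lt_pi (by linarith) (by linarith)
  have cch : 0 < cos (c / 2) := cos_pos_of_mem_Ioo ⟨by linarith, by linarith⟩
  have sabh : 0 < sin ((a + b) / 2) := sin_pos_of_pos_of_lt_pi (by linarith) (by linarith)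
  have cabh : 0 < cos ((a - b) / 2) := cos_pos_of_mem_Ioo ⟨by linarith, by linarith⟩
  have sABh : 0 < sin ((α + β) / 2) := sin_pos_of_pos_of_lt_pi (by linarith) (by linarith)
  have cABh : 0 < cos ((α - β) / 2) := cos_pos_of_mem_Ioo ⟨by linarith, by linarith⟩
  -- pythagorean identities
  have pa := sin_sq_add_cos_sq a
  have pb := sin_sq_add_cos_sq b
  have pc := sin_sq_add_cos_sq c
  have pA := sin_sq_add_cos_sq α
  have pB := sin_sq_add_cos_sq β
  have pG := sin_sq_add_cos_sq γ
  -- law of sines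
  have L2 : sin α * sin c = sin γ * sin a := by
    refine mul_right_cancel₀ (ne_of_gt sb) ?_
    refine pos_sq_eq (by positivity) (by positivity) ?_
    linear_combination (sin b ^ 2) * pc + (1 - cos c ^ 2) * pb + sin b ^ 2 * sin c ^ 2 * pA +
      (cos a - cos b * cos c + sin b * sin c * cos α) * hlc₁ - sin a ^ 2 * pb -
      (1 - cos b ^ 2) * pa - sin a ^ 2 * sin b ^ 2 * pG -
      (cos c - cos a * cos b + sin a * sin b * cos γ) * hlc₃
  have L3 : sin β * sin c = sin γ * sin b := by
    refine mul_right_cancel₀ (ne_of_gt sa) ?_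
    refine pos_sq_eq (by positivity) (by positivity) ?_
    linear_combination (sin a ^ 2) * pc + (1 - cos c ^ 2) * pa + sin a ^ 2 * sin c ^ 2 * pB +
      (cos b - cos c * cos a + sin c * sin a * cos β) * hlc₂ - sin b ^ 2 * pa -
      (1 - cos a ^ 2) * pb - sin b ^ 2 * sin a ^ 2 * pG -
      (cos c - cos a * cos b + sin a * sin b * cos γ) * hlc₃
  have L1 : sin α * sin b = sin β * sin a := by
    refine mul_right_cancel₀ (ne_of_gt sc) ?_
    refine pos_sq_eq (by positivity) (by positivity) ?_
    linear_combination (sin c ^ 2) * pb + (1 - cos b ^ 2) * pc + sin c ^ 2 * sin b ^ 2 * pA +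
      (cos a - cos b * cos c + sin b * sin c * cos α) * hlc₁ - sin a ^ 2 * pc -
      (1 - cos a ^ 2) * pb - sin a ^ 2 * sin c ^ 2 * pB -
      (cos b - cos c * cos a + sin c * sin a * cos β) * hlc₂ +
      (1 - cos a ^ 2) * pb - (1 - cos c ^ 2) * pa
  -- half-angle facts
  have hsab := sin_sq_half' (a + b)
  have hcab := cos_sq_half' (a - b)
  have hsG := sin_sq_half' γ
  have hcG := cos_sq_half' γ
  have hsc2 := sin_sq_half' c
  have hcc2 := cos_sq_half' c
  have hsAB := sin_sq_half' (α + β)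
  have hcAB := cos_sq_half' (α - β)
  have hca : cos (a + b) = cos a * cos b - sin a * sin b := cos_add a b
  have hcs : cos (a - b) = cos a * cos b + sin a * sin b := cos_sub a b
  have hcA : cos (α + β) = cos α * cos β - sin α * sin β := cos_add α β
  have hcS : cos (α - β) = cos α * cos β + sin α * sin β := cos_sub α β
  -- equation 2
  have e2 : sin ((a + b) / 2) * sin (γ / 2) = cos ((α - β) / 2) * sin (c / 2) := by
    refine pos_sq_eq (by positivity) (by positivity) ?_
    have : (sin ((a + b) / 2) * sin (γ / 2)) ^ 2 = ((1 - cos (a + b)) / 2) * ((1 - cos γ) / 2) := by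
      rw [mul_pow, hsab, hsG]
    rw [this]
    have : (cos ((α - β) / 2) * sin (c / 2)) ^ 2 = ((1 + cos (α - β)) / 2) * ((1 - cos c) / 2) := by
      rw [mul_pow, hcAB, hsc2]
    rw [this, hca, hcS]
    linear_combination (-(sin β * sin c) / 4) * L2 + (-(sin γ * sin a) / 4) * L3 +
      ((1 - cos γ) / 4) * hlc₃ - ((1 - cos c) / 4) * hla₃ -
      (sin a * sin b / 4) * pG + (sin α * sin β / 4) * pc
  -- equation 3
  have e3 : cos ((a - b) / 2) * cos (γ / 2) = sin ((α + β) / 2) * cos (c / 2) := by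
    refine pos_sq_eq (by positivity) (by positivity) ?_
    have : (cos ((a - b) / 2) * cos (γ / 2)) ^ 2 = ((1 + cos (a - b)) / 2) * ((1 + cos γ) / 2) := by
      rw [mul_pow, hcab, hcG]
    rw [this]
    have : (sin ((α + β) / 2) * cos (c / 2)) ^ 2 = ((1 - cos (α + β)) / 2) * ((1 + cos c) / 2) := by
      rw [mul_pow, hsAB, hcc2]
    rw [this, hcs, hcA]
    linear_combination (-(sin β * sin c) / 4) * L2 + (-(sin γ * sin a) / 4) * L3 -
      (sin a * sin b / 4) * pG + (sin α * sin β / 4) * pc -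
      ((1 + cos γ) / 4) * hlc₃ + ((1 + cos c) / 4) * hla₃
  -- the "sum" identities
  have E13 : (cos a + cos b) * sin γ = sin (α + β) * (1 + cos c) := by
    refine mul_right_cancel₀ (show (sin a * sin b * sin c : ℝ) ≠ 0 by positivity) ?_
    rw [sin_add]
    linear_combination (-(cos a + cos b) * sin b * sin c) * L2 +
      (sin b * sin α * (cos a + cos b)) * pc + ((1 + cos c) * (cos a - cos b * cos c)) * L1 +
      ((1 + cos c) * sin b * sin α) * hlc₂ + ((1 + cos c) * sin a * sin β) * hlc₁
  have E24 : (cos b - cos a) * sin γ = sin (α - β) * (1 - cos c) := by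
    refine mul_right_cancel₀ (show (sin a * sin b * sin c : ℝ) ≠ 0 by positivity) ?_
    rw [sin_sub]
    linear_combination (-(cos b - cos a) * sin b * sin c) * L2 +
      (sin b * sin α * (cos b - cos a)) * pc - ((1 - cos c) * (cos a - cos b * cos c)) * L1 +
      ((1 - cos c) * sin b * sin α) * hlc₂ - ((1 - cos c) * sin a * sin β) * hlc₁
  -- half-angle forms of sums
  have hAsum : cos a + cos b = 2 * cos ((a + b) / 2) * cos ((a - b) / 2) := cos_add_cos a b
  have hAsub : cos b - cos a = -2 * sin ((b + a) / 2) * sin ((b - a) / 2) := cos_sub_cos b a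
  have hGd := sin_half_eq γ
  have hABd := sin_half_eq (α + β)
  have hABs := sin_half_eq (α - β)
  have hccd : 1 + cos c = 2 * cos (c / 2) ^ 2 := by rw [hcc2]; ring
  have hscd : 1 - cos c = 2 * sin (c / 2) ^ 2 := by rw [hsc2]; ring
  -- equation 1 from E13 and e3
  have e1 : cos ((a + b) / 2) * sin (γ / 2) = cos ((α + β) / 2) * cos (c / 2) := by
    refine mul_right_cancel₀ (show (sin ((α + β) / 2) * cos (c / 2) : ℝ) ≠ 0 by positivity) ?_
    rw [hAsum, hGd, hABd, hccd] at E13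
    linear_combination (1 / 4) * E13 - (cos ((a + b) / 2) * sin (γ / 2)) * e3
  -- equation 4 from E24 and e2
  have e4 : sin ((a - b) / 2) * cos (γ / 2) = sin ((α - β) / 2) * sin (c / 2) := by
    refine mul_right_cancel₀ (show (cos ((α - β) / 2) * sin (c / 2) : ℝ) ≠ 0 by positivity) ?_
    rw [hAsub, hGd, hABs, hscd] at E24
    have hsym1 : sin ((b + a) / 2) = sin ((a + b) / 2) := by ring_nf
    have hsym2 : sin ((b - a) / 2) = -sin ((a - b) / 2) := by
      rw [show (b - a) / 2 = -((a - b) / 2) by ring, sin_neg]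
    rw [hsym1, hsym2] at E24
    linear_combination (1 / 4) * E24 - (sin ((a - b) / 2) * cos (γ / 2)) * e2
  exact ⟨e1, e2, e3, e4⟩
end
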